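/- Let φ be a Bernstein function with κ = φ(0) ≥ 0 and for q ≥ 0 set φ^{†q}(z) = q + φ(z). Then for every fixed z = a + ib with a > 0, the map q ↦ A_{φ^{†q}}(z) := ∫₀^b arg φ^{†q}(a+iu) du is non-increasing on [0,∞). -/

import Mathlib

open MeasureTheory Filter Set

/-- A Bernstein function, given by its representing triplet `(κ, δ, μ)`:
`φ(u) = κ + δ·u + ∫₀^∞ (1 - e^{-u y}) μ(dy)`, with `κ, δ ≥ 0`,
`μ` a nonnegative measure on `(0,∞)` with `∫ min(1,y) μ(dy) < ∞`, and `φ ≢ 0`. -/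
structure BernsteinFn where
  κ : ℝ
  δ : ℝ
  μ : Measure ℝ
  hκ : 0 ≤ κ
  hδ : 0 ≤ δ
  hsupp : μ (Set.Iic 0) = 0
  hint : Integrable (fun y : ℝ => min 1 y) μ
  nontriv : ¬ (κ = 0 ∧ δ = 0 ∧ μ = 0)

/-- The Bernstein function as a real function on `(0,∞)`. -/
noncomputable def BernsteinFn.toFun (φ : BernsteinFn) (u : ℝ) : ℝ :=
  φ.κ + φ.δ * u + ∫ y, (1 - Real.exp (-(u * y))) ∂φ.μ

/-- The holomorphic extension of the Bernstein function to the right half-plane. -/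
noncomputable def BernsteinFn.toFunC (φ : BernsteinFn) (z : ℂ) : ℂ :=
  (φ.κ : ℂ) + (φ.δ : ℂ) * z + ∫ y, (1 - Complex.exp (-(z * (y : ℂ)))) ∂φ.μ

/-- The derivative of the Bernstein function: `φ'(u) = δ + ∫₀^∞ y e^{-u y} μ(dy)`. -/
noncomputable def BernsteinFn.deriv1 (φ : BernsteinFn) (u : ℝ) : ℝ :=
  φ.δ + ∫ y, y * Real.exp (-(u * y)) ∂φ.μ

/-!
Differentiating under the integral sign, the `q`-derivative of `∫₀^b arg (q + φ(a + iu)) du` is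
`∫₀^b Im (q + φ(a + iu))⁻¹ du`. The function `h = (q + φ)⁻¹` is holomorphic on `Re z > 0`, and
`Re h(x + ib) ≤ h(x)` for real `x > 0` because `Re φ(x + ib) ≥ φ(x)`. Cauchy's theorem on the
rectangle `[a, R] × [0, b]` therefore bounds the vertical integral of `Im h` at `Re z = a` by the
one at `Re z = R`, which tends to `0` as `R → ∞`; so the derivative is nonpositive.
-/

open Complex Topology
open scoped Interval

lemma le_add_mul_min_one {t A B y : ℝ} (hA : 0 ≤ A) (hB : 0 ≤ B) (hy : 0 ≤ y)
    (h₁ : t ≤ A) (h₂ : t ≤ B * y) : t ≤ (A + B) * min 1 y := by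
  rcases le_total y 1 with hy1 | hy1
  · rw [min_eq_right hy1]; nlinarith
  · rw [min_eq_left hy1]; linarith

lemma norm_one_sub_cexp_neg_mul_le {z : ℂ} (hz : 0 ≤ z.re) {y : ℝ} (hy : 0 ≤ y) :
    ‖1 - cexp (-(z * y))‖ ≤ (2 + 2 * ‖z‖) * min 1 y := by
  have hexp : ‖cexp (-(z * y))‖ ≤ 1 := by
    rw [norm_exp, Real.exp_le_one_iff]; simpa using mul_nonneg hz hy
  have hle_two : ‖1 - cexp (-(z * y))‖ ≤ 2 := by
    linarith [norm_sub_le (1 : ℂ) (cexp (-(z * y))), norm_one (α := ℂ)]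
  have hzy : ‖-(z * y)‖ = ‖z‖ * y := by simp [abs_of_nonneg hy]
  refine le_add_mul_min_one zero_le_two (by positivity) hy hle_two ?_
  rcases le_or_gt (‖z‖ * y) 1 with h | h
  · calc ‖1 - cexp (-(z * y))‖ ≤ 2 * ‖-(z * y)‖ :=
          norm_sub_rev (1 : ℂ) _ ▸ norm_exp_sub_one_le (hzy ▸ h)
      _ = 2 * ‖z‖ * y := by rw [hzy, mul_assoc]
  · linarith

lemma mul_exp_neg_mul_le {r y : ℝ} (hr : 0 < r) (hy : 0 ≤ y) :
    y * Real.exp (-(r * y)) ≤ (r⁻¹ + 1) * min 1 y := by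
  refine le_add_mul_min_one (by positivity) zero_le_one hy ?_ ?_
  · rw [Real.exp_neg, ← div_eq_mul_inv, div_le_iff₀ (Real.exp_pos _), inv_mul_eq_div,
      le_div_iff₀ hr]
    linarith [Real.add_one_le_exp (r * y)]
  · rw [one_mul]
    exact mul_le_of_le_one_right hy (Real.exp_le_one_iff.mpr (by nlinarith))

lemma abs_sin_mul_le {u y : ℝ} (hy : 0 ≤ y) : |Real.sin (u * y)| ≤ (1 + |u|) * min 1 y :=
  le_add_mul_min_one zero_le_one (abs_nonneg u) hy (Real.abs_sin_le_one _)
    (Real.abs_sin_le_abs.trans_eq (by rw [abs_mul, abs_of_nonneg hy]))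

lemma norm_exp_neg_mul_mul_min_one_le {R y : ℝ} (hR : 0 ≤ R) (hy : 0 ≤ y) :
    ‖Real.exp (-(R * y)) * min 1 y‖ ≤ min 1 y := by
  rw [Real.norm_eq_abs, abs_of_nonneg (by positivity)]
  exact mul_le_of_le_one_left (by positivity) (Real.exp_le_one_iff.mpr (by nlinarith))

lemma re_one_sub_cexp_neg_mul (z : ℂ) (y : ℝ) :
    (1 - cexp (-(z * y))).re = 1 - Real.exp (-(z.re * y)) * Real.cos (z.im * y) := by
  simp [Complex.exp_re]

lemma im_one_sub_cexp_neg_mul (z : ℂ) (y : ℝ) :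
    (1 - cexp (-(z * y))).im = Real.exp (-(z.re * y)) * Real.sin (z.im * y) := by
  simp [Complex.exp_im]

lemma re_inv_le_inv_of_le_re {t : ℝ} (ht : 0 < t) {ζ : ℂ} (h : t ≤ ζ.re) : (ζ⁻¹).re ≤ t⁻¹ := by
  have hre : 0 < ζ.re := ht.trans_le h
  rw [inv_re, div_le_iff₀ (normSq_pos.mpr fun h0 => by simp [h0] at hre), normSq_apply]
  rw [← div_eq_inv_mul, le_div_iff₀ ht]
  nlinarith [mul_self_nonneg ζ.im]

lemma abs_im_inv_le {ζ : ℂ} (h : 0 < ζ.re) : |(ζ⁻¹).im| ≤ |ζ.im| / ζ.re ^ 2 := by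
  rw [inv_im, abs_div, abs_neg, abs_of_nonneg (normSq_nonneg ζ)]
  exact div_le_div_of_nonneg_left (abs_nonneg _) (by positivity)
    (by rw [normSq_apply]; nlinarith [mul_self_nonneg ζ.im])

lemma integral_im_vertical_le_of_re_le {h : ℂ → ℂ} {a R b : ℝ} (haR : a ≤ R)
    (hd : DifferentiableOn ℂ h ([[a, R]] ×ℂ [[0, b]]))
    (hre : ∀ x ∈ Icc a R, (h (x + b * I)).re ≤ (h x).re) :
    ∫ u in (0 : ℝ)..b, (h (a + u * I)).im ≤ ∫ u in (0 : ℝ)..b, (h (R + u * I)).im := by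
  have hrect := integral_boundary_rect_eq_zero_of_differentiableOn h a (R + b * I)
    (by simpa using hd)
  have hcont : ∀ {g : ℝ → ℂ} {s t : ℝ}, Continuous g →
      (∀ x ∈ [[s, t]], (g x).re ∈ [[a, R]] ∧ (g x).im ∈ [[0, b]]) →
      ContinuousOn (fun x => h (g x)) [[s, t]] := fun hg hmaps =>
    hd.continuousOn.comp hg.continuousOn fun x hx => mem_reProdIm.mpr (hmaps x hx)
  have hbot : ContinuousOn (fun x : ℝ => h x) [[a, R]] :=
    hcont (by fun_prop) fun x hx => by simp [hx]
  have htop : ContinuousOn (fun x : ℝ => h (x + b * I)) [[a, R]] :=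
    hcont (by fun_prop) fun x hx => by simp [hx]
  have hright : ContinuousOn (fun u : ℝ => h (R + u * I)) [[0, b]] :=
    hcont (by fun_prop) fun u hu => by simp [hu]
  have hleft : ContinuousOn (fun u : ℝ => h (a + u * I)) [[0, b]] :=
    hcont (by fun_prop) fun u hu => by simp [hu]
  have hhoriz : ∫ x in a..R, (h (x + b * I)).re ≤ ∫ x in a..R, (h x).re :=
    intervalIntegral.integral_mono_on haR
      ((continuous_re.comp_continuousOn htop).intervalIntegrable (μ := volume))
      ((continuous_re.comp_continuousOn hbot).intervalIntegrable (μ := volume)) hre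
  -- real part of the boundary identity: (bottom - top) - right + left = 0
  have := congrArg re hrect
  simp only [ofReal_re, ofReal_im, add_re, add_im, mul_re, mul_im, I_re, I_im, mul_zero,
    mul_one, sub_zero, zero_mul, add_zero, zero_add, ofReal_zero, sub_re, smul_eq_mul,
    zero_re, one_mul, zero_sub] at this
  have e₁ := intervalIntegral.intervalIntegral_re hbot.intervalIntegrable (μ := volume)
  have e₂ := intervalIntegral.intervalIntegral_re htop.intervalIntegrable (μ := volume)
  have e₃ := intervalIntegral.intervalIntegral_im hright.intervalIntegrable (μ := volume)
  have e₄ := intervalIntegral.intervalIntegral_im hleft.intervalIntegrable (μ := volume)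
  simp only [RCLike.re_to_complex, RCLike.im_to_complex] at e₁ e₂ e₃ e₄
  linarith

lemma hasDerivAt_arg_ofReal_add {ζ : ℂ} {q : ℝ} (h : q + ζ ∈ slitPlane) :
    HasDerivAt (fun p : ℝ => arg (p + ζ)) ((q + ζ)⁻¹).im q := by
  have hlog := ((hasDerivAt_id q).ofReal_comp.add_const ζ).clog_real h
  simpa [Function.comp_def, log_im] using imCLM.hasFDerivAt.comp_hasDerivAt q hlog

lemma hasDerivAt_integral_arg_ofReal_add {w : ℝ → ℂ} (hw : Continuous w) {c q₀ : ℝ}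
    (hc : ∀ u, c ≤ (w u).re) (hq₀ : 0 < q₀ + c) (b : ℝ) :
    HasDerivAt (fun q : ℝ => ∫ u in (0 : ℝ)..b, arg (q + w u))
      (∫ u in (0 : ℝ)..b, ((q₀ + w u)⁻¹).im) q₀ := by
  set r := (q₀ + c) / 2 with hr_def
  have hr : 0 < r := by positivity
  have hball : ∀ q ∈ Metric.ball q₀ r, ∀ u, r < (q + w u).re := fun q hq u => by
    rw [Metric.mem_ball, Real.dist_eq, abs_lt] at hq
    simp only [add_re, ofReal_re]
    linarith [hc u]
  have hslit : ∀ q ∈ Metric.ball q₀ r, ∀ u, (q : ℂ) + w u ∈ slitPlane := fun q hq u =>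
    Or.inl (hr.trans (hball q hq u))
  have hne : ∀ u, (q₀ : ℂ) + w u ≠ 0 := fun u =>
    slitPlane_ne_zero (hslit q₀ (Metric.mem_ball_self hr) u)
  refine (intervalIntegral.hasDerivAt_integral_of_dominated_loc_of_deriv_le (μ := volume)
    (F := fun (q u : ℝ) => arg (q + w u)) (F' := fun (q u : ℝ) => ((q + w u)⁻¹).im)
    (bound := fun _ => r⁻¹) (Metric.ball_mem_nhds q₀ hr) ?_ ?_ ?_ ?_ intervalIntegrable_const ?_).2
  · exact Eventually.of_forall fun q =>
      (measurable_arg.comp (hw.const_add _).measurable).aestronglyMeasurable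
  · refine (continuous_iff_continuousAt.2 fun u => ?_).intervalIntegrable 0 b
    exact (continuousAt_arg (hslit q₀ (Metric.mem_ball_self hr) u)).comp
      (f := fun u => (q₀ : ℂ) + w u) (hw.const_add _).continuousAt
  · exact (continuous_im.comp ((hw.const_add _).inv₀ hne)).aestronglyMeasurable
  · refine ae_of_all _ fun u _ q hq => ?_
    calc ‖((q + w u)⁻¹).im‖ ≤ ‖(q + w u)⁻¹‖ := abs_im_le_norm _
      _ = ‖q + w u‖⁻¹ := norm_inv _
      _ ≤ r⁻¹ := inv_anti₀ hr ((hball q hq u).le.trans (re_le_norm _))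
  · exact ae_of_all _ fun u _ q hq => hasDerivAt_arg_ofReal_add (hslit q hq u)

namespace BernsteinFn

variable (φ : BernsteinFn) {q a : ℝ}

lemma ae_pos : ∀ᵐ y ∂φ.μ, 0 < y := by
  rw [ae_iff]
  convert φ.hsupp using 2
  ext; simp

lemma integrable_one_sub_cexp {z : ℂ} (hz : 0 ≤ z.re) :
    Integrable (fun y : ℝ => 1 - cexp (-(z * y))) φ.μ := by
  refine (φ.hint.const_mul (2 + 2 * ‖z‖)).mono' (by fun_prop) ?_
  filter_upwards [φ.ae_pos] with y hy
  exact norm_one_sub_cexp_neg_mul_le hz hy.le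

lemma integrable_one_sub_exp_mul_cos {z : ℂ} (hz : 0 ≤ z.re) :
    Integrable (fun y => 1 - Real.exp (-(z.re * y)) * Real.cos (z.im * y)) φ.μ := by
  have := (φ.integrable_one_sub_cexp hz).re
  simpa only [RCLike.re_to_complex, re_one_sub_cexp_neg_mul] using this

lemma integrable_one_sub_exp {x : ℝ} (hx : 0 ≤ x) :
    Integrable (fun y => 1 - Real.exp (-(x * y))) φ.μ := by
  simpa using φ.integrable_one_sub_exp_mul_cos (z := x) (by simpa using hx)

lemma re_toFunC {z : ℂ} (hz : 0 ≤ z.re) : (φ.toFunC z).re =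
    φ.κ + φ.δ * z.re + ∫ y, (1 - Real.exp (-(z.re * y)) * Real.cos (z.im * y)) ∂φ.μ := by
  have := integral_re (φ.integrable_one_sub_cexp hz)
  simp only [RCLike.re_to_complex, re_one_sub_cexp_neg_mul] at this
  simp [toFunC, ← this]

lemma im_toFunC {z : ℂ} (hz : 0 ≤ z.re) : (φ.toFunC z).im =
    φ.δ * z.im + ∫ y, Real.exp (-(z.re * y)) * Real.sin (z.im * y) ∂φ.μ := by
  have := integral_im (φ.integrable_one_sub_cexp hz)
  simp only [RCLike.im_to_complex, im_one_sub_cexp_neg_mul] at this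
  simp [toFunC, ← this]

lemma toFunC_ofReal {x : ℝ} (hx : 0 ≤ x) : φ.toFunC x = φ.toFun x := by
  apply Complex.ext
  · simp [φ.re_toFunC (z := x) (by simpa using hx), toFun]
  · simp [φ.im_toFunC (z := x) (by simpa using hx)]

lemma toFun_le_re_toFunC {z : ℂ} (hz : 0 ≤ z.re) : φ.toFun z.re ≤ (φ.toFunC z).re := by
  rw [φ.re_toFunC hz, toFun]
  refine add_le_add le_rfl ?_
  refine integral_mono_ae (φ.integrable_one_sub_exp hz) (φ.integrable_one_sub_exp_mul_cos hz) ?_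
  filter_upwards with y
  nlinarith [Real.cos_le_one (z.im * y), Real.exp_pos (-(z.re * y))]

lemma toFun_add_mul_sub_le {x x' : ℝ} (hx : 0 ≤ x) (h : x ≤ x') :
    φ.toFun x + φ.δ * (x' - x) ≤ φ.toFun x' := by
  have hint : ∫ y, (1 - Real.exp (-(x * y))) ∂φ.μ ≤ ∫ y, (1 - Real.exp (-(x' * y))) ∂φ.μ := by
    refine integral_mono_ae (φ.integrable_one_sub_exp hx) (φ.integrable_one_sub_exp (hx.trans h)) ?_
    filter_upwards [φ.ae_pos] with y hy
    have := Real.exp_le_exp.mpr (neg_le_neg (mul_le_mul_of_nonneg_right h hy.le))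
    linarith
  simp only [toFun]
  linarith

lemma toFun_pos {x : ℝ} (hx : 0 < x) : 0 < φ.toFun x := by
  have hker : ∀ᵐ y ∂φ.μ, 0 < 1 - Real.exp (-(x * y)) := by
    filter_upwards [φ.ae_pos] with y hy
    simpa using mul_pos hx hy
  have hI : 0 ≤ ∫ y, (1 - Real.exp (-(x * y))) ∂φ.μ :=
    integral_nonneg_of_ae (hker.mono fun _ h => h.le)
  have hδx := mul_nonneg φ.hδ hx.le
  by_contra! hle
  simp only [toFun] at hle
  have hκ : φ.κ = 0 := by linarith [φ.hκ]
  have hδ : φ.δ = 0 := by nlinarith [φ.hκ]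
  have hzero : (fun y => 1 - Real.exp (-(x * y))) =ᵐ[φ.μ] 0 :=
    (integral_eq_zero_iff_of_nonneg_ae (hker.mono fun _ h => h.le)
      (φ.integrable_one_sub_exp hx.le)).mp (by linarith [φ.hκ])
  refine φ.nontriv ⟨hκ, hδ, ae_eq_bot.mp (eventually_false_iff_eq_bot.mp ?_)⟩
  filter_upwards [hker, hzero] with y hpos hzero
  exact hpos.ne' hzero

lemma differentiableAt_toFunC {z : ℂ} (hz : 0 < z.re) : DifferentiableAt ℂ φ.toFunC z := by
  set r := z.re / 2 with hr_def
  have hr : 0 < r := by positivity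
  have hball : ∀ w ∈ Metric.ball z r, r < w.re := fun w hw => by
    have := (abs_re_le_norm (w - z)).trans_lt (mem_ball_iff_norm.mp hw)
    rw [sub_re, abs_lt] at this
    linarith
  have hint := hasDerivAt_integral_of_dominated_loc_of_deriv_le (μ := φ.μ) (x₀ := z)
    (F := fun w (y : ℝ) => 1 - cexp (-(w * y))) (F' := fun w (y : ℝ) => y * cexp (-(w * y)))
    (bound := fun y => (r⁻¹ + 1) * min 1 y) (Metric.ball_mem_nhds z hr)
    (Eventually.of_forall fun _ => by fun_prop) (φ.integrable_one_sub_cexp hz.le)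
    (by fun_prop) ?bound (φ.hint.const_mul _) ?deriv
  · exact ((differentiableAt_const _).add (differentiableAt_id.const_mul _)).add
      hint.2.differentiableAt
  case bound =>
    filter_upwards [φ.ae_pos] with y hy w hw
    calc ‖(y : ℂ) * cexp (-(w * y))‖ = y * Real.exp (-(w.re * y)) := by
          simp [norm_exp, abs_of_pos hy]
      _ ≤ y * Real.exp (-(r * y)) := by
          gcongr
          exact (hball w hw).le
      _ ≤ (r⁻¹ + 1) * min 1 y := mul_exp_neg_mul_le hr hy.le
  case deriv =>
    refine Eventually.of_forall fun y w _ => ?_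
    convert (hasDerivAt_mul_const (y : ℂ)).fun_neg.cexp.const_sub 1 using 1
    ring

lemma differentiableOn_toFunC : DifferentiableOn ℂ φ.toFunC {z | 0 < z.re} :=
  fun _ hz => (φ.differentiableAt_toFunC hz).differentiableWithinAt

lemma abs_im_toFunC_le {z : ℂ} (hz : 0 ≤ z.re) : |(φ.toFunC z).im| ≤
    φ.δ * |z.im| + (1 + |z.im|) * ∫ y, Real.exp (-(z.re * y)) * min 1 y ∂φ.μ := by
  have hint : Integrable (fun y => Real.exp (-(z.re * y)) * min 1 y) φ.μ := by
    refine φ.hint.mono' (by fun_prop) ?_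
    filter_upwards [φ.ae_pos] with y hy
    exact norm_exp_neg_mul_mul_min_one_le hz hy.le
  rw [φ.im_toFunC hz, ← integral_const_mul]
  refine (abs_add_le _ _).trans (add_le_add (by rw [abs_mul, abs_of_nonneg φ.hδ]) ?_)
  refine (abs_integral_le_integral_abs).trans (integral_mono_ae ?_ (hint.const_mul _) ?_)
  · exact ((φ.integrable_one_sub_cexp hz).im.congr
      (ae_of_all _ fun y => by simp only [RCLike.im_to_complex, im_one_sub_cexp_neg_mul])).abs
  · filter_upwards [φ.ae_pos] with y hy
    rw [abs_mul, Real.abs_exp, mul_left_comm]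
    exact mul_le_mul_of_nonneg_left (abs_sin_mul_le hy.le) (Real.exp_pos _).le

lemma integral_exp_neg_mul_min_one_nonneg (R : ℝ) :
    0 ≤ ∫ y, Real.exp (-(R * y)) * min 1 y ∂φ.μ := integral_nonneg_of_ae <| by
  filter_upwards [φ.ae_pos] with y hy
  exact mul_nonneg (Real.exp_pos _).le (le_min zero_le_one hy.le)

lemma tendsto_integral_exp_neg_mul_min_one :
    Tendsto (fun R : ℝ => ∫ y, Real.exp (-(R * y)) * min 1 y ∂φ.μ) atTop (𝓝 0) := by
  have hlim := tendsto_integral_filter_of_dominated_convergence (μ := φ.μ) (l := atTop)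
    (F := fun (R y : ℝ) => Real.exp (-(R * y)) * min 1 y) (f := fun _ => 0) (fun y => min 1 y)
    (Eventually.of_forall fun _ => by fun_prop) ?bound φ.hint ?lim
  · simpa using hlim
  case bound =>
    filter_upwards [eventually_ge_atTop 0] with R hR
    filter_upwards [φ.ae_pos] with y hy
    exact norm_exp_neg_mul_mul_min_one_le hR hy.le
  case lim =>
    filter_upwards [φ.ae_pos] with y hy
    have : Tendsto (fun R : ℝ => -(R * y)) atTop atBot :=
      tendsto_neg_atTop_atBot.comp (tendsto_id.atTop_mul_const hy)
    simpa using (Real.tendsto_exp_atBot.comp this).mul_const (min 1 y)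

lemma le_re_add_toFunC (hq : 0 ≤ q) (ha : 0 < a) {z : ℂ} (hz : a ≤ z.re) :
    φ.toFun a + φ.δ * (z.re - a) ≤ (q + φ.toFunC z).re := by
  have := φ.toFun_le_re_toFunC (ha.le.trans hz)
  have := φ.toFun_add_mul_sub_le ha.le hz
  simp only [add_re, ofReal_re]
  linarith

lemma re_add_toFunC_pos (hq : 0 ≤ q) (ha : 0 < a) {z : ℂ} (hz : a ≤ z.re) :
    0 < (q + φ.toFunC z).re :=
  (add_pos_of_pos_of_nonneg (φ.toFun_pos ha) (mul_nonneg φ.hδ (sub_nonneg.mpr hz))).trans_le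
    (φ.le_re_add_toFunC hq ha hz)

lemma differentiableAt_inv_add_toFunC (hq : 0 ≤ q) (ha : 0 < a) {z : ℂ} (hz : a ≤ z.re) :
    DifferentiableAt ℂ (fun z => (q + φ.toFunC z)⁻¹) z :=
  ((differentiableAt_const _).add (φ.differentiableAt_toFunC (ha.trans_le hz))).inv
    fun h0 => (φ.re_add_toFunC_pos hq ha hz).ne' (by simpa using congrArg re h0)

lemma re_inv_add_toFunC_le (hq : 0 ≤ q) {x : ℝ} (hx : 0 < x) (b : ℝ) :
    ((q + φ.toFunC (x + b * I))⁻¹).re ≤ ((q + φ.toFunC x)⁻¹).re := by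
  have hpos : 0 < q + φ.toFun x := by linarith [φ.toFun_pos hx]
  rw [φ.toFunC_ofReal hx.le, ← ofReal_add, ← ofReal_inv, ofReal_re]
  refine re_inv_le_inv_of_le_re hpos ?_
  have := φ.toFun_le_re_toFunC (z := x + b * I) (by simpa using hx.le)
  simp only [add_re, ofReal_re, mul_re, I_re, I_im, ofReal_im, mul_zero, mul_one, sub_zero,
    add_zero] at this ⊢
  linarith

lemma abs_im_inv_add_toFunC_le (hq : 0 ≤ q) (ha : 0 < a) {R u B : ℝ} (hR : a < R)
    (hu : |u| ≤ B) : |((q + φ.toFunC (R + u * I))⁻¹).im| ≤ B / (φ.toFun a * (R - a)) +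
      (1 + B) * (∫ y, Real.exp (-(R * y)) * min 1 y ∂φ.μ) / φ.toFun a ^ 2 := by
  have hre : φ.toFun a + φ.δ * (R - a) ≤ (q + φ.toFunC (R + u * I)).re := by
    simpa using φ.le_re_add_toFunC hq ha (z := R + u * I) (by simpa using hR.le)
  have him : |(q + φ.toFunC (R + u * I)).im| ≤
      φ.δ * |u| + (1 + |u|) * ∫ y, Real.exp (-(R * y)) * min 1 y ∂φ.μ := by
    simpa using φ.abs_im_toFunC_le (z := R + u * I) (by simpa using (ha.trans hR).le)
  have hε := φ.integral_exp_neg_mul_min_one_nonneg R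
  generalize q + φ.toFunC (R + u * I) = ζ at hre him ⊢
  generalize ∫ y, Real.exp (-(R * y)) * min 1 y ∂φ.μ = ε at him hε ⊢
  have hc : 0 < φ.toFun a := φ.toFun_pos ha
  have hδ : 0 ≤ φ.δ * (R - a) := mul_nonneg φ.hδ (by linarith)
  have hζ : 0 < ζ.re := by linarith
  have hB : 0 ≤ B := (abs_nonneg u).trans hu
  -- `Re ζ ≥ φ(a)` and `Re ζ ≥ δ (R - a)` control the drift term `δ u` without splitting on `δ = 0`
  have hsq : φ.toFun a * (φ.δ * (R - a)) ≤ ζ.re ^ 2 := by nlinarith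
  calc |(ζ⁻¹).im| ≤ |ζ.im| / ζ.re ^ 2 := abs_im_inv_le hζ
    _ ≤ φ.δ * B / ζ.re ^ 2 + (1 + B) * ε / ζ.re ^ 2 := by
        rw [← add_div]
        gcongr
        nlinarith [mul_le_mul_of_nonneg_left hu φ.hδ, mul_le_mul_of_nonneg_right hu hε]
    _ ≤ B / (φ.toFun a * (R - a)) + (1 + B) * ε / φ.toFun a ^ 2 := by
        gcongr ?_ + (1 + B) * ε / ?_
        · rw [div_le_div_iff₀ (by positivity) (by nlinarith)]
          nlinarith [mul_le_mul_of_nonneg_left hsq hB]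
        · nlinarith

lemma tendsto_integral_im_inv_add_toFunC (hq : 0 ≤ q) (ha : 0 < a) (b : ℝ) :
    Tendsto (fun R : ℝ => ∫ u in (0 : ℝ)..b, ((q + φ.toFunC (R + u * I))⁻¹).im) atTop (𝓝 0) := by
  have hc : 0 < φ.toFun a := φ.toFun_pos ha
  have hbound : Tendsto (fun R : ℝ => |b| / (φ.toFun a * (R - a)) +
      (1 + |b|) * (∫ y, Real.exp (-(R * y)) * min 1 y ∂φ.μ) / φ.toFun a ^ 2) atTop (𝓝 0) := by
    have hlin : Tendsto (fun R : ℝ => φ.toFun a * (R - a)) atTop atTop :=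
      (tendsto_atTop_add_const_right atTop (-a) tendsto_id).const_mul_atTop hc
    simpa using (tendsto_const_nhds.div_atTop hlin).add
      ((φ.tendsto_integral_exp_neg_mul_min_one.const_mul (1 + |b|)).div_const (φ.toFun a ^ 2))
  refine squeeze_zero_norm' ?_ (by simpa using hbound.mul_const |b|)
  filter_upwards [eventually_gt_atTop a] with R hR
  simpa using intervalIntegral.norm_integral_le_of_norm_le_const (a := 0) (b := b)
    (f := fun u : ℝ => ((q + φ.toFunC (R + u * I))⁻¹).im) fun u hu =>
      φ.abs_im_inv_add_toFunC_le hq ha hR (B := |b|)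
        (by simpa using abs_sub_left_of_mem_uIcc (uIoc_subset_uIcc hu))

lemma integral_im_inv_add_toFunC_nonpos (hq : 0 ≤ q) (ha : 0 < a) (b : ℝ) :
    ∫ u in (0 : ℝ)..b, ((q + φ.toFunC (a + u * I))⁻¹).im ≤ 0 := by
  refine ge_of_tendsto (φ.tendsto_integral_im_inv_add_toFunC hq ha b) ?_
  filter_upwards [eventually_ge_atTop a] with R haR
  refine integral_im_vertical_le_of_re_le (h := fun z => (q + φ.toFunC z)⁻¹) haR (fun z hz => ?_)
    fun x hx => φ.re_inv_add_toFunC_le hq (ha.trans_le hx.1) b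
  have hzre : a ≤ z.re := by
    have := (mem_reProdIm.mp hz).1
    rw [uIcc_of_le haR] at this
    exact this.1
  exact (φ.differentiableAt_inv_add_toFunC hq ha hzre).differentiableWithinAt

end BernsteinFn

/-- For `φ^{†q} = q + φ` and fixed `z = a + ib` with `a > 0`, the map
`q ↦ A_{φ^{†q}}(z) = ∫₀^b arg φ^{†q}(a+iu) du` is non-increasing on `[0,∞)`. -/
theorem stmt12 (φ : BernsteinFn) (a b : ℝ) (ha : 0 < a) :
    AntitoneOn
      (fun q : ℝ =>
        ∫ u in (0 : ℝ)..b, Complex.arg ((q : ℂ) + φ.toFunC ((a : ℂ) + (u : ℂ) * Complex.I)))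
      (Set.Ici 0) := by
  have hw : Continuous fun u : ℝ => φ.toFunC (a + u * I) :=
    φ.differentiableOn_toFunC.continuousOn.comp_continuous (by fun_prop) fun u => by simpa using ha
  have hc : ∀ u : ℝ, φ.toFun a ≤ (φ.toFunC (a + u * I)).re := fun u => by
    simpa using φ.toFun_le_re_toFunC (z := a + u * I) (by simpa using ha.le)
  have hderiv : ∀ q ∈ Ici (0 : ℝ), HasDerivAt _ _ q := fun q hq =>
    hasDerivAt_integral_arg_ofReal_add hw hc (add_pos_of_nonneg_of_pos hq (φ.toFun_pos ha)) b
  refine antitoneOn_of_hasDerivWithinAt_nonpos (convex_Ici 0)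
    (fun q hq => (hderiv q hq).continuousAt.continuousWithinAt)
    (fun q hq => (hderiv q (interior_subset hq)).hasDerivWithinAt) fun q hq => ?_
  exact φ.integral_im_inv_add_toFunC_nonpos (interior_subset hq) ha b
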